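/- Let X → B be a Boolean set and G an ultrafilter in X. If x ∼ y (so x ∨ y exists) and x ∨ y ∈ G, then x ∈ G or y ∈ G. -/
import Mathlib


/-- A presheaf of sets over a meet-semilattice `E`: a carrier `X` with projection
`p : X → E` and restriction maps `res x f h : X` for `f ≤ p x`, satisfying the
identity and composition laws. -/
structure PresheafOfSets (E : Type*) [SemilatticeInf E] where
  X : Type*
  p : X → E
  res : ∀ x : X, ∀ f : E, f ≤ p x → X
  p_res : ∀ x f h, p (res x f h) = f
  res_self : ∀ x, res x (p x) le_rfl = x
  res_comp : ∀ x f g (hf : f ≤ p x) (_ : g ≤ f) (hg : g ≤ p x)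
      (hg' : g ≤ p (res x f hf)), res (res x f hf) g hg' = res x g hg

namespace PresheafOfSets

variable {E : Type*} [SemilatticeInf E] (P : PresheafOfSets E)

/-- The natural partial order: `x ≤ y` iff `x` is the restriction of `y` to `p x`. -/
def le (x y : P.X) : Prop := ∃ h : P.p x ≤ P.p y, x = P.res y (P.p x) h

/-- The right normal band operation `x ∘ y = y|^{p y}_{p x ⊓ p y}`. -/
def circ (x y : P.X) : P.X := P.res y (P.p x ⊓ P.p y) inf_le_right

/-- `m` is the meet of `x` and `y` with respect to the natural partial order. -/
def IsMeet (m x y : P.X) : Prop :=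
  P.le m x ∧ P.le m y ∧ ∀ z, P.le z x → P.le z y → P.le z m

/-- `j` is the join of `x` and `y` with respect to the natural partial order. -/
def IsJoin (j x y : P.X) : Prop :=
  P.le x j ∧ P.le y j ∧ ∀ z, P.le x z → P.le y z → P.le j z

/-- `x ∼ y`: the meet `x ∧ y` exists and `p (x ∧ y) = p x ⊓ p y`. -/
def Compatible (x y : P.X) : Prop :=
  ∃ m, P.IsMeet m x y ∧ P.p m = P.p x ⊓ P.p y

end PresheafOfSets

/-- A Boolean set: a presheaf of sets with global support over a generalized Boolean
algebra `B`, with a minimum element `zero`, joins of compatible pairs, and such that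
`p x = ⊥` implies `x = zero`. -/
structure BooleanSet (B : Type*) [GeneralizedBooleanAlgebra B] extends PresheafOfSets B where
  p_surj : Function.Surjective toPresheafOfSets.p
  zero : toPresheafOfSets.X
  zero_le : ∀ x, toPresheafOfSets.le zero x
  eq_zero : ∀ x, toPresheafOfSets.p x = ⊥ → x = zero
  join_exists : ∀ x y, toPresheafOfSets.Compatible x y →
    ∃ j, toPresheafOfSets.IsJoin j x y

namespace BooleanSet

variable {B : Type*} [GeneralizedBooleanAlgebra B] (S : BooleanSet B)

/-- `y \ x = y|^{p y}_{p y \ p x}`. -/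
def minus (y x : S.X) : S.X := S.res y (S.p y \ S.p x) sdiff_le

end BooleanSet

namespace BooleanSet

variable {B : Type*} [GeneralizedBooleanAlgebra B] (S : BooleanSet B)

/-- A filter in the Boolean set `S`: nonempty, down-directed, upward closed with
respect to the natural partial order. -/
def IsFilterX (G : Set S.X) : Prop :=
  G.Nonempty ∧ (∀ x ∈ G, ∀ y ∈ G, ∃ z ∈ G, S.le z x ∧ S.le z y) ∧
    (∀ x ∈ G, ∀ y, S.le x y → y ∈ G)

/-- A proper filter in `S`. -/
def IsProperFilterX (G : Set S.X) : Prop := S.IsFilterX G ∧ G ≠ Set.univ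

/-- An ultrafilter in `S`: a maximal proper filter. -/
def IsUltrafilterX (G : Set S.X) : Prop :=
  S.IsProperFilterX G ∧ ∀ H : Set S.X, S.IsProperFilterX H → G ⊆ H → G = H

end BooleanSet


section AuxLemmas

namespace PresheafOfSets

variable {E : Type*} [SemilatticeInf E] (P : PresheafOfSets E)

theorem res_congr' (x : P.X) {f g : E} (hf : f ≤ P.p x) (hg : g ≤ P.p x) (h : f = g) :
    P.res x f hf = P.res x g hg := by subst h; rfl

theorem res_heq {x y : P.X} (e : x = y) (f : E) (hx : f ≤ P.p x) :
    P.res x f hx = P.res y f (e ▸ hx) := by subst e; rfl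

theorem le_refl' (x : P.X) : P.le x x := ⟨le_rfl, (P.res_self x).symm⟩

theorem le_p {x y : P.X} (h : P.le x y) : P.p x ≤ P.p y := h.1

theorem le_trans' {x y z : P.X} (h1 : P.le x y) (h2 : P.le y z) : P.le x z := by
  obtain ⟨a, ha⟩ := h1
  obtain ⟨b, hb⟩ := h2
  refine ⟨a.trans b, ?_⟩
  exact ha.trans ((P.res_heq hb _ a).trans (P.res_comp z _ _ b a (a.trans b) _))

theorem res_le (x : P.X) (f : E) (h : f ≤ P.p x) : P.le (P.res x f h) x :=
  ⟨(P.p_res x f h).symm ▸ h, P.res_congr' x h _ (P.p_res x f h).symm⟩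

end PresheafOfSets

namespace BooleanSet

variable {B : Type*} [GeneralizedBooleanAlgebra B] (S : BooleanSet B)

theorem p_zero : S.p S.zero = ⊥ := by
  obtain ⟨x0, hx0⟩ := S.p_surj ⊥
  exact le_antisymm (hx0 ▸ (S.zero_le x0).1) bot_le

/-- If `zero ∈ G` for a filter `G`, then `G = univ`. -/
theorem zero_mem_univ {G : Set S.X} (hG : S.IsFilterX G) (hz : S.zero ∈ G) :
    G = Set.univ := by
  ext w
  simp only [Set.mem_univ, iff_true]
  exact hG.2.2 S.zero hz w (S.zero_le w)

/-- Descending along restrictions: if `x ≤ j ∈ G` and some `g ∈ G` has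
`p g ≤ p x`, then `x ∈ G`. -/
theorem mem_of_le_of_support {G : Set S.X} (hG : S.IsFilterX G) {x j : S.X}
    (hxj : S.le x j) (hjG : j ∈ G) {g : S.X} (hgG : g ∈ G) (hpg : S.p g ≤ S.p x) :
    x ∈ G := by
  obtain ⟨z, hzG, hzg, hzj⟩ := hG.2.1 g hgG j hjG
  obtain ⟨hzpj, hzeq⟩ := hzj
  obtain ⟨hxpj, hxeq⟩ := hxj
  have hzx : S.p z ≤ S.p x := hzg.1.trans hpg
  have hle : S.le z x := by
    refine ⟨hzx, ?_⟩
    have e1 : S.res j (S.p z) hzpj =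
        S.res (S.res j (S.p x) hxpj) (S.p z)
          (by rw [S.p_res]; exact hzx) :=
      (S.res_comp j (S.p x) (S.p z) hxpj hzx hzpj _).symm
    have e2 : S.res (S.res j (S.p x) hxpj) (S.p z)
        (by rw [S.p_res]; exact hzx) = S.res x (S.p z) hzx := by
      have h3 := S.res_heq (x := S.res j (S.p x) hxpj) (y := x) hxeq.symm (S.p z)
        (by rw [S.p_res]; exact hzx)
      exact h3
    exact hzeq.trans (e1.trans e2)
  exact hG.2.2 z hzG x (S.toPresheafOfSets.le_trans' hle (S.le_refl' x))

/-- `z ≤ g` implies `z \ c ≤ g \ c` (relative complements of supports). -/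
theorem minus_mono {z g : S.X} (h : S.le z g) (c : B) :
    S.le (S.res z (S.p z \ c) sdiff_le) (S.res g (S.p g \ c) sdiff_le) := by
  obtain ⟨hp, he⟩ := h
  have hsd : S.p z \ c ≤ S.p g \ c := sdiff_le_sdiff_right hp
  have e1 : S.res z (S.p z \ c) sdiff_le = S.res g (S.p z \ c) (sdiff_le.trans hp) := by
    refine (S.res_heq he _ _).trans ?_
    exact S.res_comp g (S.p z) (S.p z \ c) hp sdiff_le (sdiff_le.trans hp) _
  have e2 : S.res (S.res g (S.p g \ c) sdiff_le) (S.p z \ c)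
      (by rw [S.p_res]; exact hsd) = S.res g (S.p z \ c) (sdiff_le.trans hp) :=
    S.res_comp g (S.p g \ c) (S.p z \ c) sdiff_le hsd (sdiff_le.trans hp) _
  refine ⟨by rw [S.p_res, S.p_res]; exact hsd, ?_⟩
  refine (e1.trans e2.symm).trans ?_
  exact S.res_congr' _ _ _ (S.p_res z _ sdiff_le).symm

/-- Key step: if `G` is an ultrafilter and no element of `G` has support below `c`,
then `G` is closed under relative complement of supports by `c`. -/
theorem minus_mem {G : Set S.X} (hG : S.IsUltrafilterX G) (c : B)
    (hc : ∀ g ∈ G, ¬ S.p g ≤ c) :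
    ∀ g ∈ G, S.res g (S.p g \ c) sdiff_le ∈ G := by
  set H : Set S.X := {w | ∃ g ∈ G, S.le (S.res g (S.p g \ c) sdiff_le) w} with hH
  have hGH : G ⊆ H := by
    intro g hg
    exact ⟨g, hg, S.res_le g _ sdiff_le⟩
  have hfil : S.IsFilterX H := by
    obtain ⟨⟨⟨g0, hg0⟩, hdir, hup⟩, hne⟩ := hG.1
    refine ⟨⟨g0, hGH hg0⟩, ?_, ?_⟩
    · rintro w1 ⟨g1, hg1, hle1⟩ w2 ⟨g2, hg2, hle2⟩
      obtain ⟨z, hz, hz1, hz2⟩ := hdir g1 hg1 g2 hg2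
      refine ⟨S.res z (S.p z \ c) sdiff_le, ⟨z, hz, S.le_refl' _⟩, ?_, ?_⟩
      · exact S.toPresheafOfSets.le_trans' (S.minus_mono hz1 c) hle1
      · exact S.toPresheafOfSets.le_trans' (S.minus_mono hz2 c) hle2
    · rintro w ⟨g, hg, hle⟩ w' hww'
      exact ⟨g, hg, S.toPresheafOfSets.le_trans' hle hww'⟩
  have hproper : S.IsProperFilterX H := by
    refine ⟨hfil, ?_⟩
    intro habs
    have hzH : S.zero ∈ H := habs ▸ Set.mem_univ _
    obtain ⟨g, hg, hle⟩ := hzH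
    have : S.p g \ c ≤ ⊥ := by
      have := hle.1
      rw [S.p_res, S.p_zero] at this
      exact this
    exact hc g hg (sdiff_eq_bot_iff.mp (le_bot_iff.mp this))
  have heq : G = H := hG.2 H hproper hGH
  intro g hg
  rw [heq]
  exact ⟨g, hg, S.le_refl' _⟩

end BooleanSet

end AuxLemmas

/-- Ultrafilters in a Boolean set are prime: if `x ∼ y` and `x ∨ y ∈ G` then `x ∈ G`
or `y ∈ G`. -/
theorem booleanSet_ultrafilter_prime {B : Type*} [GeneralizedBooleanAlgebra B]
    (S : BooleanSet B) (G : Set S.X) (hG : S.IsUltrafilterX G)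
    (x y j : S.X) (hxy : S.Compatible x y) (hj : S.IsJoin j x y) (hjG : j ∈ G) :
    x ∈ G ∨ y ∈ G := by
  by_contra hcon
  push_neg at hcon
  obtain ⟨hxG, hyG⟩ := hcon
  have hfil := hG.1.1
  have hcx : ∀ g ∈ G, ¬ S.p g ≤ S.p x := fun g hg hle =>
    hxG (S.mem_of_le_of_support hfil hj.1 hjG hg hle)
  have hcy : ∀ g ∈ G, ¬ S.p g ≤ S.p y := fun g hg hle =>
    hyG (S.mem_of_le_of_support hfil hj.2.1 hjG hg hle)
  have hx' : S.p x ≤ S.p j := hj.1.1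
  have hy' : S.p y ≤ S.p j := hj.2.1.1
  have hpj : S.p j ≤ S.p x ⊔ S.p y := by
    have hsup : S.p x ⊔ S.p y ≤ S.p j := sup_le hx' hy'
    have hxj' : S.le x (S.res j (S.p x ⊔ S.p y) hsup) := by
      refine ⟨by rw [S.p_res]; exact le_sup_left, ?_⟩
      obtain ⟨a, ha⟩ := hj.1
      exact ha.trans (S.res_comp j (S.p x ⊔ S.p y) (S.p x) hsup le_sup_left a
        (by rw [S.p_res]; exact le_sup_left)).symm
    have hyj' : S.le y (S.res j (S.p x ⊔ S.p y) hsup) := by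
      refine ⟨by rw [S.p_res]; exact le_sup_right, ?_⟩
      obtain ⟨a, ha⟩ := hj.2.1
      exact ha.trans (S.res_comp j (S.p x ⊔ S.p y) (S.p y) hsup le_sup_right a
        (by rw [S.p_res]; exact le_sup_right)).symm
    have := (hj.2.2 _ hxj' hyj').1
    rwa [S.p_res] at this
  have hj1 : S.res j (S.p j \ S.p x) sdiff_le ∈ G :=
    S.minus_mem hG (S.p x) hcx j hjG
  set j1 := S.res j (S.p j \ S.p x) sdiff_le with hj1def
  have hj2 : S.res j1 (S.p j1 \ S.p y) sdiff_le ∈ G :=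
    S.minus_mem hG (S.p y) hcy j1 hj1
  have hp2 : S.p (S.res j1 (S.p j1 \ S.p y) sdiff_le) = ⊥ := by
    rw [S.p_res, hj1def, S.p_res, sdiff_sdiff, sdiff_eq_bot_iff]
    exact hpj
  have hz : S.zero ∈ G := by
    rw [← S.eq_zero _ hp2]
    exact hj2
  exact hG.1.2 (S.zero_mem_univ hfil hz)
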